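/- Let F be a twisting cocycle for the Hopf algebra H and let (E,ρ) be an adjoint H-module algebra. Define φ: E → E by φ(a) := Σ ad(F₁)(a)·ρ(F₂) and φ⁻¹: E → E by φ⁻¹(a) := Σ ρ(F₁)·a·ρ(γ(F₂ζ)). Then: (i) φ(a) = Σ ρ(F̄₁)·a·ρ(γ(F̄₂)ϑ) for all a ∈ E; (ii) φ and φ⁻¹ are mutually inverse k-linear bijections of E; (iii) φ is an algebra isomorphism from E with the cotwist product to E with the original product, i.e. φ(a∗b) = φ(a)·φ(b) for all a,b ∈ E. -/

import Mathlib

/-!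
Expanding `ad`, `φ(a)` is `x ⊗ y ⊗ z ↦ ρ(x) a ρ(γ(y) z)` evaluated on `(Δ ⊗ id)(F)`. The cocycle
identity rewrites `(Δ ⊗ id)(F)` as `(id ⊗ Δ)(F) (1 ⊗ F) (F⁻¹ ⊗ 1)`, and the antipode axiom
`Σ γ(y₁) y₂ = ε(y)` collapses the result to `Σ ρ(F̄₁) a ρ(γ(F̄₂) ϑ)`, which is (i). The same
collapses, applied to two rearrangements of the cocycle identity, show that `ϑ` is invertible with
inverse `Σ F̄₁ γ(F̄₂) = γ(ζ)`. Now `φ` and `φ⁻¹` are both of the form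
`a ↦ Σ ρ(X₁) a ρ(u γ(X₂) v)`, and such maps compose like products `X * Y` in `H ⊗ H` as soon as
the inner `v` and outer `u` multiply to `1`; this gives (ii).

For (iii), `φ(a ∗ b)` and `φ(a) φ(b)` are the functional `x ⊗ y ⊗ z ↦ ad(x)(a) ad(y)(b) ρ(z)`
evaluated on the two sides `(Δ ⊗ id)(F) (F ⊗ 1)` and `(id ⊗ Δ)(F) (1 ⊗ F)` of the cocycle identity.
This uses only that `ad` makes `E` a module algebra and that `Σ ad(h₁)(a) ρ(h₂) = ρ(h) a`.
-/

open TensorProduct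

noncomputable section

variable (k : Type*) [Field k] (H : Type*) [Ring H] [HopfAlgebra k H]

/-- The comultiplication of `H` as a linear map. -/
noncomputable def comulL : H →ₗ[k] H ⊗[k] H := Coalgebra.comul

/-- The counit of `H` as a linear map. -/
noncomputable def counitL : H →ₗ[k] k := Coalgebra.counit

/-- The antipode of `H`. -/
noncomputable def anti : H →ₗ[k] H := HopfAlgebra.antipode (R := k)

/-- `F` together with its inverse `Finv` is a twisting (Drinfeld) cocycle:
`F` is invertible, `(Δ⊗id)(F)·(F⊗1) = (id⊗Δ)(F)·(1⊗F)` and `(ε⊗id)(F) = 1 = (id⊗ε)(F)`. -/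
def IsCocycle (F Finv : H ⊗[k] H) : Prop :=
  F * Finv = 1 ∧ Finv * F = 1 ∧
  (TensorProduct.assoc k H H H) ((TensorProduct.map (comulL k H) LinearMap.id F) * (F ⊗ₜ 1))
    = (TensorProduct.map LinearMap.id (comulL k H) F) * ((1 : H) ⊗ₜ F) ∧
  (TensorProduct.lid k H) (TensorProduct.map (counitL k H) LinearMap.id F) = 1 ∧
  (TensorProduct.rid k H) (TensorProduct.map LinearMap.id (counitL k H) F) = 1

/-- `ϑ = Σ γ(F₁)F₂`. -/
noncomputable def theta (F : H ⊗[k] H) : H :=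
  LinearMap.mul' k H (TensorProduct.map (anti k H) LinearMap.id F)

/-- `ζ = Σ F̄₂ γ⁻¹(F̄₁)`, where `γinv` is the inverse of the antipode and `Finv = Σ F̄₁⊗F̄₂`. -/
noncomputable def zeta (γinv : H →ₗ[k] H) (Finv : H ⊗[k] H) : H :=
  LinearMap.mul' k H (TensorProduct.map LinearMap.id γinv ((TensorProduct.comm k H H) Finv))

/-- `R` (with inverse `Rinv`) is a triangular structure: `R` is invertible,
`R Δ(h) = Δᵒᵖ(h) R`, the two hexagon identities `(Δ⊗id)(R) = R₁₃R₂₃`,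
`(id⊗Δ)(R) = R₁₃R₁₂` hold, and `R₂₁ R = 1`. -/
def IsTriangular (R Rinv : H ⊗[k] H) : Prop :=
  R * Rinv = 1 ∧ Rinv * R = 1 ∧
  (∀ h : H, R * comulL k H h = (TensorProduct.comm k H H) (comulL k H h) * R) ∧
  (TensorProduct.assoc k H H H) (TensorProduct.map (comulL k H) LinearMap.id R)
    = (TensorProduct.map LinearMap.id (TensorProduct.mk k H H 1) R) * ((1 : H) ⊗ₜ R) ∧
  (TensorProduct.map LinearMap.id (comulL k H) R)
    = (TensorProduct.map LinearMap.id (TensorProduct.mk k H H 1) R) *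
      ((TensorProduct.assoc k H H H) (R ⊗ₜ (1 : H))) ∧
  ((TensorProduct.comm k H H) R) * R = 1

/-- `bcomp U V x y = (U x) ∘ₗ (V y)`, bilinearly in `x, y`. -/
noncomputable def bcomp {A B C : Type*} [AddCommMonoid A] [AddCommMonoid B] [AddCommMonoid C]
    [Module k A] [Module k B] [Module k C]
    (U : H →ₗ[k] B →ₗ[k] C) (V : H →ₗ[k] A →ₗ[k] B) : H →ₗ[k] H →ₗ[k] (A →ₗ[k] C) :=
  ((((LinearMap.llcomp k A B C) ∘ₗ U).flip) ∘ₗ V).flip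

/-- Given an action `α` of `H` on `M`, the induced action of `H ⊗ H` on `M ⊗ M`:
`pairAct α (x ⊗ y) (a ⊗ b) = (α x a) ⊗ (α y b)`. -/
noncomputable def pairAct {M : Type*} [AddCommMonoid M] [Module k M]
    (α : H →ₗ[k] M →ₗ[k] M) : H ⊗[k] H →ₗ[k] (M ⊗[k] M →ₗ[k] M ⊗[k] M) :=
  (TensorProduct.homTensorHomMap (RingHom.id k) M M M M) ∘ₗ (TensorProduct.map α α)

/-- `sandwich α β (x ⊗ y) a = α x * a * β y`. -/
noncomputable def sandwich {E : Type*} [Ring E] [Algebra k E]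
    (α β : H →ₗ[k] E) : H ⊗[k] H →ₗ[k] E →ₗ[k] E :=
  TensorProduct.lift (bcomp k H ((LinearMap.mul k E) ∘ₗ α) ((LinearMap.mul k E).flip ∘ₗ β))

/-- The adjoint action associated with `ρ : H →ₗ E`:
`adAct ρ h a = Σ ρ(h⁽¹⁾) a ρ(γ(h⁽²⁾))`. -/
noncomputable def adAct {E : Type*} [Ring E] [Algebra k E]
    (ρ : H →ₗ[k] E) : H →ₗ[k] E →ₗ[k] E :=
  (sandwich k H ρ (ρ ∘ₗ anti k H)) ∘ₗ comulL k H

/-- The twisted comultiplication `Δ̃(h) = F⁻¹ Δ(h) F`. -/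
noncomputable def comulTw (F Finv : H ⊗[k] H) : H →ₗ[k] H ⊗[k] H :=
  (LinearMap.mulRight k F) ∘ₗ (LinearMap.mulLeft k Finv) ∘ₗ comulL k H

/-- The twisted antipode `γ̃(h) = ϑ⁻¹ γ(h) ϑ`. -/
noncomputable def antiTw (ϑ ϑinv : H) : H →ₗ[k] H :=
  (LinearMap.mulRight k ϑ) ∘ₗ (LinearMap.mulLeft k ϑinv) ∘ₗ anti k H

variable (A : Type*) [Ring A] [Algebra k A]

/-- `act` makes `A` a left `H`-module algebra:
`act` is a representation of `H`, `h•(ab) = Σ (h⁽¹⁾•a)(h⁽²⁾•b)` and `h•1 = ε(h)1`. -/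
def IsModAlg (act : H →ₗ[k] Module.End k A) : Prop :=
  act 1 = 1 ∧ (∀ g h : H, act (g * h) = act g * act h) ∧
  (∀ (h : H) (a b : A),
    act h (a * b) = LinearMap.mul' k A ((pairAct k H act) (comulL k H h) (a ⊗ₜ b))) ∧
  (∀ h : H, act h 1 = (counitL k H h) • (1 : A))

/-- The adjoint-type action of `H` on `End_k(A)`: `h.X = Σ ρ(h⁽¹⁾) ∘ X ∘ ρ(γ(h⁽²⁾))`. -/
noncomputable def dotAct (act : H →ₗ[k] Module.End k A) :
    H →ₗ[k] Module.End k A →ₗ[k] Module.End k A :=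
  (sandwich k H (E := Module.End k A) act (act ∘ₗ anti k H)) ∘ₗ comulL k H

section Cotwist

variable {k H}

open Coalgebra HopfAlgebra

lemma anti_apply (h : H) : anti k H h = antipode k h := rfl

lemma tensorAssoc_mul (P Q : (H ⊗[k] H) ⊗[k] H) :
    TensorProduct.assoc k H H H (P * Q)
      = TensorProduct.assoc k H H H P * TensorProduct.assoc k H H H Q :=
  map_mul (Algebra.TensorProduct.assoc k k k H H H) P Q

def comulTensorId : H ⊗[k] H →ₐ[k] H ⊗[k] (H ⊗[k] H) :=
  (Algebra.TensorProduct.assoc k k k H H H).toAlgHom.comp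
    (Algebra.TensorProduct.map (Bialgebra.comulAlgHom k H) (AlgHom.id k H))

def idTensorComul : H ⊗[k] H →ₐ[k] H ⊗[k] (H ⊗[k] H) :=
  Algebra.TensorProduct.map (AlgHom.id k H) (Bialgebra.comulAlgHom k H)

def tensorOne : H ⊗[k] H →ₐ[k] H ⊗[k] (H ⊗[k] H) :=
  (Algebra.TensorProduct.assoc k k k H H H).toAlgHom.comp Algebra.TensorProduct.includeLeft

def oneTensor : H ⊗[k] H →ₐ[k] H ⊗[k] (H ⊗[k] H) :=
  Algebra.TensorProduct.includeRight

def counitTensorId : H ⊗[k] H →ₐ[k] H :=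
  (Algebra.TensorProduct.lid k H).toAlgHom.comp
    (Algebra.TensorProduct.map (Bialgebra.counitAlgHom k H) (AlgHom.id k H))

def idTensorCounit : H ⊗[k] H →ₐ[k] H :=
  (Algebra.TensorProduct.rid k k H).toAlgHom.comp
    (Algebra.TensorProduct.map (AlgHom.id k H) (Bialgebra.counitAlgHom k H))

@[simp] lemma comulTensorId_tmul (x y : H) :
    comulTensorId (x ⊗ₜ[k] y) = TensorProduct.assoc k H H H (comul x ⊗ₜ y) := rfl

@[simp] lemma idTensorComul_tmul (x y : H) :
    idTensorComul (x ⊗ₜ[k] y) = x ⊗ₜ comul y := rfl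

@[simp] lemma tensorOne_apply (X : H ⊗[k] H) :
    tensorOne X = TensorProduct.assoc k H H H (X ⊗ₜ 1) := rfl

@[simp] lemma oneTensor_apply (X : H ⊗[k] H) : oneTensor X = (1 : H) ⊗ₜ[k] X := rfl

@[simp] lemma counitTensorId_tmul (x y : H) :
    counitTensorId (x ⊗ₜ[k] y) = counit (R := k) x • y := rfl

@[simp] lemma idTensorCounit_tmul (x y : H) :
    idTensorCounit (x ⊗ₜ[k] y) = counit (R := k) y • x := rfl

namespace IsCocycle

variable {F Finv : H ⊗[k] H} (hF : IsCocycle k H F Finv)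
include hF

lemma comulTensorId_mul_tensorOne :
    comulTensorId F * tensorOne F = idTensorComul F * oneTensor F :=
  (tensorAssoc_mul _ _).symm.trans hF.2.2.1

lemma map_mul_map_inv {B : Type*} [Ring B] [Algebra k B] (f : H ⊗[k] H →ₐ[k] B) :
    f F * f Finv = 1 := by
  rw [← map_mul, hF.1, map_one]

lemma map_inv_mul_map {B : Type*} [Ring B] [Algebra k B] (f : H ⊗[k] H →ₐ[k] B) :
    f Finv * f F = 1 := by
  rw [← map_mul, hF.2.1, map_one]

lemma comulTensorId_eq :
    comulTensorId F = idTensorComul F * oneTensor F * tensorOne Finv := by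
  rw [← hF.comulTensorId_mul_tensorOne, mul_assoc, hF.map_mul_map_inv, mul_one]

lemma tensorOne_mul_oneTensor_inv :
    tensorOne F * oneTensor Finv = comulTensorId Finv * idTensorComul F := by
  calc tensorOne F * oneTensor Finv
      = comulTensorId Finv * (comulTensorId F * tensorOne F) * oneTensor Finv := by
        rw [← mul_assoc, hF.map_inv_mul_map, one_mul]
    _ = comulTensorId Finv * idTensorComul F := by
        rw [hF.comulTensorId_mul_tensorOne, mul_assoc, mul_assoc, hF.map_mul_map_inv, mul_one]

lemma counitTensorId_inv : counitTensorId Finv = 1 := by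
  simpa [show counitTensorId F = 1 from hF.2.2.2.1] using hF.map_inv_mul_map counitTensorId

end IsCocycle

def antipodeMul : H ⊗[k] H →ₗ[k] H := LinearMap.mul' k H ∘ₗ LinearMap.rTensor H (antipode k)

def mulAntipode : H ⊗[k] H →ₗ[k] H := LinearMap.mul' k H ∘ₗ LinearMap.lTensor H (antipode k)

@[simp] lemma antipodeMul_tmul (y z : H) : antipodeMul (y ⊗ₜ[k] z) = antipode k y * z := rfl

@[simp] lemma mulAntipode_tmul (y z : H) : mulAntipode (y ⊗ₜ[k] z) = y * antipode k z := rfl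

lemma antipodeMul_comul (h : H) : antipodeMul (comul (R := k) h) = counit (R := k) h • 1 := by
  rw [← Algebra.algebraMap_eq_smul_one]
  exact mul_antipode_rTensor_comul_apply h

lemma mulAntipode_comul (h : H) : mulAntipode (comul (R := k) h) = counit (R := k) h • 1 := by
  rw [← Algebra.algebraMap_eq_smul_one]
  exact mul_antipode_lTensor_comul_apply h

lemma antipodeMul_mul_tmul (U : H ⊗[k] H) (p q : H) :
    antipodeMul (U * p ⊗ₜ[k] q) = antipode k p * antipodeMul U * q := by
  induction U using TensorProduct.induction_on with
  | zero => simp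
  | tmul x y => simp [antipode_mul_antidistrib, mul_assoc]
  | add U V hU hV => simp [add_mul, mul_add, hU, hV]

lemma mulAntipode_tmul_mul (U : H ⊗[k] H) (p q : H) :
    mulAntipode (p ⊗ₜ[k] q * U) = p * mulAntipode U * antipode k q := by
  induction U using TensorProduct.induction_on with
  | zero => simp
  | tmul x y => simp [antipode_mul_antidistrib, mul_assoc]
  | add U V hU hV => simp [add_mul, mul_add, hU, hV]

lemma antipodeMul_comul_mul (g : H) (U : H ⊗[k] H) :
    antipodeMul (comul (R := k) g * U) = counit (R := k) g • antipodeMul U := by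
  induction U using TensorProduct.induction_on with
  | zero => simp
  | tmul x y => simp [antipodeMul_mul_tmul, antipodeMul_comul]
  | add U V hU hV => simp [mul_add, hU, hV]

lemma mulAntipode_mul_comul (g : H) (U : H ⊗[k] H) :
    mulAntipode (U * comul (R := k) g) = counit (R := k) g • mulAntipode U := by
  induction U using TensorProduct.induction_on with
  | zero => simp
  | tmul x y => simp [mulAntipode_tmul_mul, mulAntipode_comul]
  | add U V hU hV => simp [add_mul, hU, hV]

lemma lTensor_antipodeMul_idTensorComul_mul (X : H ⊗[k] H) (Y : H ⊗[k] (H ⊗[k] H)) :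
    LinearMap.lTensor H antipodeMul (idTensorComul X * Y)
      = (idTensorCounit X ⊗ₜ[k] (1 : H)) * LinearMap.lTensor H antipodeMul Y := by
  induction X using TensorProduct.induction_on with
  | zero => simp
  | tmul x y =>
    induction Y using TensorProduct.induction_on with
    | zero => simp
    | tmul a V => simp [antipodeMul_comul_mul, TensorProduct.smul_tmul']
    | add Y Y' hY hY' => simp only [mul_add, map_add, hY, hY']
  | add X X' hX hX' => simp [add_mul, add_tmul, hX, hX']

lemma lTensor_antipodeMul_oneTensor_mul_tensorOne (Y Z : H ⊗[k] H) :
    LinearMap.lTensor H antipodeMul (oneTensor Y * tensorOne Z)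
      = TensorProduct.map LinearMap.id
          (LinearMap.mulRight k (antipodeMul Y) ∘ₗ antipode k) Z := by
  induction Z using TensorProduct.induction_on with
  | zero => simp
  | tmul z w => simp [antipodeMul_mul_tmul]
  | add Z Z' hZ hZ' => simp only [map_add, mul_add, hZ, hZ']

lemma mul'_lTensor_antipodeMul_comulTensorId (X : H ⊗[k] H) :
    LinearMap.mul' k H (LinearMap.lTensor H antipodeMul (comulTensorId X)) = counitTensorId X := by
  have hassoc (V : H ⊗[k] H) (y : H) :
      LinearMap.mul' k H (LinearMap.lTensor H antipodeMul (TensorProduct.assoc k H H H (V ⊗ₜ y)))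
        = mulAntipode V * y := by
    induction V using TensorProduct.induction_on with
    | zero => simp
    | tmul a b => simp [mul_assoc]
    | add V V' hV hV' => simp [add_tmul, add_mul, hV, hV']
  induction X using TensorProduct.induction_on with
  | zero => simp
  | tmul x y => simp [hassoc, mulAntipode_comul]
  | add X X' hX hX' => simp [hX, hX']

lemma mul'_map_id_mulRight_antipode (t : H) (Z : H ⊗[k] H) :
    LinearMap.mul' k H (TensorProduct.map LinearMap.id (LinearMap.mulRight k t ∘ₗ antipode k) Z)
      = mulAntipode Z * t := by
  induction Z using TensorProduct.induction_on with
  | zero => simp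
  | tmul z w => simp [mul_assoc]
  | add Z Z' hZ hZ' => simp [add_mul, hZ, hZ']

def antipodeMulAntipode : H ⊗[k] (H ⊗[k] H) →ₗ[k] H :=
  LinearMap.mul' k H ∘ₗ TensorProduct.map (antipode k) mulAntipode

lemma antipodeMulAntipode_tensorOne_mul_oneTensor (Y Z : H ⊗[k] H) :
    antipodeMulAntipode (tensorOne Y * oneTensor Z) = antipodeMul Y * mulAntipode Z := by
  induction Y using TensorProduct.induction_on with
  | zero => simp
  | tmul a b => simp [antipodeMulAntipode, mulAntipode_tmul_mul, mul_assoc]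
  | add Y Y' hY hY' => simp only [map_add, add_mul, hY, hY']

lemma antipodeMulAntipode_comulTensorId_mul_idTensorComul (X Y : H ⊗[k] H) :
    antipodeMulAntipode (comulTensorId X * idTensorComul Y)
      = antipode k (idTensorCounit Y) * antipode k (counitTensorId X) := by
  have hassoc (V : H ⊗[k] H) (y a b : H) :
      antipodeMulAntipode (TensorProduct.assoc k H H H (V ⊗ₜ y) * a ⊗ₜ[k] comul b)
        = counit (R := k) b • (antipode k a * antipodeMul V * antipode k y) := by
    induction V using TensorProduct.induction_on with
    | zero => simp
    | tmul v w =>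
      simp [antipodeMulAntipode, mulAntipode_mul_comul, antipode_mul_antidistrib, mul_assoc]
    | add V V' hV hV' => simp [add_tmul, add_mul, mul_add, hV, hV']
  induction X using TensorProduct.induction_on with
  | zero => simp
  | tmul x y =>
    induction Y using TensorProduct.induction_on with
    | zero => simp
    | tmul a b => simp [hassoc, antipodeMul_comul, smul_smul, mul_comm]
    | add Y Y' hY hY' => simp only [mul_add, map_add, add_mul, hY, hY']
  | add X X' hX hX' => simp [add_mul, mul_add, hX, hX']

namespace IsCocycle

variable {F Finv : H ⊗[k] H} (hF : IsCocycle k H F Finv)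
include hF

lemma lTensor_antipodeMul_comulTensorId :
    LinearMap.lTensor H antipodeMul (comulTensorId F)
      = TensorProduct.map LinearMap.id
          (LinearMap.mulRight k (theta k H F) ∘ₗ antipode k) Finv := by
  rw [hF.comulTensorId_eq, mul_assoc, lTensor_antipodeMul_idTensorComul_mul,
    lTensor_antipodeMul_oneTensor_mul_tensorOne, show idTensorCounit F = 1 from hF.2.2.2.2,
    ← Algebra.TensorProduct.one_def, one_mul]
  rfl

lemma mulAntipode_inv_mul_theta : mulAntipode Finv * theta k H F = 1 := by
  rw [← mul'_map_id_mulRight_antipode, ← hF.lTensor_antipodeMul_comulTensorId,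
    mul'_lTensor_antipodeMul_comulTensorId]
  exact hF.2.2.2.1

lemma theta_mul_mulAntipode_inv : theta k H F * mulAntipode Finv = 1 := by
  rw [show theta k H F = antipodeMul F from rfl, ← antipodeMulAntipode_tensorOne_mul_oneTensor,
    hF.tensorOne_mul_oneTensor_inv, antipodeMulAntipode_comulTensorId_mul_idTensorComul,
    hF.counitTensorId_inv, show idTensorCounit F = 1 from hF.2.2.2.2, antipode_one, one_mul]

end IsCocycle

@[simp] lemma antiTw_apply (v u h : H) : antiTw k H v u h = u * antipode k h * v := rfl

lemma anti_eq_antiTw_one_one : anti k H = antiTw k H 1 1 := by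
  ext h
  simp [anti_apply]

lemma mulRight_comp_anti (t : H) : LinearMap.mulRight k t ∘ₗ anti k H = antiTw k H t 1 := by
  ext h
  simp [anti_apply]

lemma anti_comp_mulRight (t : H) :
    anti k H ∘ₗ LinearMap.mulRight k t = antiTw k H 1 (anti k H t) := by
  ext h
  simp [anti_apply, antipode_mul_antidistrib]

lemma anti_zeta {γinv : H →ₗ[k] H} (hγ : ∀ h : H, anti k H (γinv h) = h) (X : H ⊗[k] H) :
    anti k H (zeta k H γinv X) = mulAntipode X := by
  induction X using TensorProduct.induction_on with
  | zero => simp [zeta]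
  | tmul x y =>
    have hγ' (h : H) : antipode k (γinv h) = h := hγ h
    simp [zeta, anti_apply, antipode_mul_antidistrib, hγ']
  | add X Y hX hY => simp only [zeta, map_add] at hX hY ⊢; rw [hX, hY]

section AdjointModuleAlgebra

variable {E : Type*} [Ring E] [Algebra k E] (ρ : H →ₐ[k] E)

@[simp] lemma sandwich_tmul (α β : H →ₗ[k] E) (x y : H) (a : E) :
    sandwich k H α β (x ⊗ₜ y) a = α x * a * β y := by
  simp [sandwich, bcomp, mul_assoc]

lemma sandwich_map_id (α β : H →ₗ[k] E) (g : H →ₗ[k] H) (U : H ⊗[k] H) (a : E) :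
    sandwich k H α β (TensorProduct.map LinearMap.id g U) a = sandwich k H α (β ∘ₗ g) U a := by
  induction U using TensorProduct.induction_on with
  | zero => simp
  | tmul x y => simp
  | add U V hU hV => simp only [map_add, LinearMap.add_apply, hU, hV]

lemma sandwich_antiTw_sandwich_antiTw {u v u' v' : H} (huv : v' * u = 1) (X Y : H ⊗[k] H)
    (a : E) :
    sandwich k H ρ.toLinearMap (ρ.toLinearMap ∘ₗ antiTw k H v u) X
        (sandwich k H ρ.toLinearMap (ρ.toLinearMap ∘ₗ antiTw k H v' u') Y a)
      = sandwich k H ρ.toLinearMap (ρ.toLinearMap ∘ₗ antiTw k H v u') (X * Y) a := by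
  induction X using TensorProduct.induction_on with
  | zero => simp
  | tmul x y =>
    induction Y using TensorProduct.induction_on with
    | zero => simp
    | tmul x' y' =>
      have h : ρ v' * ρ u = 1 := by rw [← map_mul, huv, map_one]
      simp only [sandwich_tmul, Algebra.TensorProduct.tmul_mul_tmul, LinearMap.coe_comp,
        Function.comp_apply, antiTw_apply, antipode_mul_antidistrib, AlgHom.toLinearMap_apply,
        map_mul, mul_assoc]
      rw [← mul_assoc (ρ v'), h, one_mul]
    | add Y Y' hY hY' => simp only [map_add, mul_add, LinearMap.add_apply, hY, hY']
  | add X X' hX hX' => simp only [map_add, add_mul, LinearMap.add_apply, hX, hX']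

lemma sandwich_antiTw_one (u v : H) (a : E) :
    sandwich k H ρ.toLinearMap (ρ.toLinearMap ∘ₗ antiTw k H v u) 1 a = a * ρ (u * v) := by
  simp [Algebra.TensorProduct.one_def]

lemma adAct_apply (h : H) (a : E) :
    adAct k H ρ.toLinearMap h a
      = sandwich k H ρ.toLinearMap (ρ.toLinearMap ∘ₗ anti k H) (comul h) a := rfl

lemma adAct_mul (x y : H) (a : E) :
    adAct k H ρ.toLinearMap (x * y) a
      = adAct k H ρ.toLinearMap x (adAct k H ρ.toLinearMap y a) := by
  simp only [adAct_apply, anti_eq_antiTw_one_one, Bialgebra.comul_mul,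
    sandwich_antiTw_sandwich_antiTw ρ (one_mul 1)]

/-- The map `φ` is `cotwistMap ρ F`. -/
def cotwistMap : H ⊗[k] H →ₗ[k] E →ₗ[k] E :=
  TensorProduct.lift
    ((bcomp k H ((LinearMap.mul k E).flip ∘ₗ ρ.toLinearMap) (adAct k H ρ.toLinearMap)).flip)

@[simp] lemma cotwistMap_tmul (x y : H) (a : E) :
    cotwistMap ρ (x ⊗ₜ y) a = adAct k H ρ.toLinearMap x a * ρ y := by
  simp [cotwistMap, bcomp]

lemma cotwistMap_eq_sandwich (X : H ⊗[k] H) (a : E) :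
    cotwistMap ρ X a
      = sandwich k H ρ.toLinearMap ρ.toLinearMap
          (LinearMap.lTensor H antipodeMul (comulTensorId X)) a := by
  have hassoc (V : H ⊗[k] H) (y : H) :
      sandwich k H ρ.toLinearMap (ρ.toLinearMap ∘ₗ anti k H) V a * ρ y
        = sandwich k H ρ.toLinearMap ρ.toLinearMap
            (LinearMap.lTensor H antipodeMul (TensorProduct.assoc k H H H (V ⊗ₜ y))) a := by
    induction V using TensorProduct.induction_on with
    | zero => simp
    | tmul v w => simp [anti_apply, mul_assoc]
    | add V V' hV hV' => simp only [add_tmul, map_add, LinearMap.add_apply, add_mul, hV, hV']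
  induction X using TensorProduct.induction_on with
  | zero => simp
  | tmul x y => rw [cotwistMap_tmul, adAct_apply, hassoc]; rfl
  | add X X' hX hX' => simp only [map_add, LinearMap.add_apply, hX, hX']

lemma cotwistMap_comul (h : H) (a : E) : cotwistMap ρ (comul (R := k) h) a = ρ h * a := by
  have hcounit (U : H ⊗[k] H) :
      sandwich k H ρ.toLinearMap ρ.toLinearMap
          (LinearMap.lTensor H antipodeMul (LinearMap.lTensor H (comul (R := k)) U)) a
        = ρ (TensorProduct.rid k H (LinearMap.lTensor H (counit (R := k)) U)) * a := by
    induction U using TensorProduct.induction_on with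
    | zero => simp
    | tmul x y => simp [antipodeMul_comul]
    | add U V hU hV => simp only [map_add, LinearMap.add_apply, add_mul, hU, hV]
  rw [cotwistMap_eq_sandwich, show comulTensorId (comul (R := k) h)
    = LinearMap.lTensor H (comul (R := k)) (comul h) from coassoc_apply h, hcounit,
    lTensor_counit_comul, TensorProduct.rid_tmul, one_smul]

lemma cotwistMap_comul_mul (g : H) (Y : H ⊗[k] H) (b : E) :
    cotwistMap ρ (comul (R := k) g * Y) b = ρ g * cotwistMap ρ Y b := by
  have hmul_tmul (U : H ⊗[k] H) (x y : H) :
      cotwistMap ρ (U * x ⊗ₜ y) b = cotwistMap ρ U (adAct k H ρ.toLinearMap x b) * ρ y := by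
    induction U using TensorProduct.induction_on with
    | zero => simp
    | tmul u v => simp [adAct_mul, mul_assoc]
    | add U V hU hV => simp only [add_mul, map_add, LinearMap.add_apply, hU, hV]
  induction Y using TensorProduct.induction_on with
  | zero => simp
  | tmul x y => rw [hmul_tmul, cotwistMap_comul, cotwistMap_tmul, mul_assoc]
  | add Y Y' hY hY' => simp only [mul_add, map_add, LinearMap.add_apply, hY, hY']

/-- The cotwist product `a ∗ b` is `cotwistMul ρ F a b`. -/
def cotwistMul (X : H ⊗[k] H) (a b : E) : E :=
  LinearMap.mul' k E (pairAct k H (adAct k H ρ.toLinearMap) X (a ⊗ₜ b))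

@[simp] lemma cotwistMul_tmul (x y : H) (a b : E) :
    cotwistMul ρ (x ⊗ₜ y) a b = adAct k H ρ.toLinearMap x a * adAct k H ρ.toLinearMap y b := by
  simp [cotwistMul, pairAct]

lemma cotwistMul_add (X Y : H ⊗[k] H) (a b : E) :
    cotwistMul ρ (X + Y) a b = cotwistMul ρ X a b + cotwistMul ρ Y a b := by
  simp [cotwistMul]

lemma cotwistMul_zero (a b : E) : cotwistMul ρ 0 a b = 0 := by
  simp [cotwistMul]

lemma adAct_apply_mul (h : H) (a b : E) :
    adAct k H ρ.toLinearMap h (a * b) = cotwistMul ρ (comul (R := k) h) a b := by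
  -- both sides are `x ⊗ y ⊗ z ↦ ad(x)(a) ρ(y) b ρ(γ z)` evaluated on the two sides of
  -- coassociativity
  let G : H ⊗[k] (H ⊗[k] H) →ₗ[k] E := LinearMap.mul' k E ∘ₗ TensorProduct.map
    ((adAct k H ρ.toLinearMap).flip a)
    ((sandwich k H ρ.toLinearMap (ρ.toLinearMap ∘ₗ anti k H)).flip b)
  have hl (U : H ⊗[k] H) : G (LinearMap.lTensor H (comul (R := k)) U) = cotwistMul ρ U a b := by
    induction U using TensorProduct.induction_on with
    | zero => simp [cotwistMul_zero]
    | tmul x y => simp [G, adAct_apply]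
    | add U V hU hV => rw [map_add, map_add, hU, hV, cotwistMul_add]
  have hr (V : H ⊗[k] H) (y : H) :
      G (TensorProduct.assoc k H H H (V ⊗ₜ y))
        = cotwistMap ρ V a * b * ρ (anti k H y) := by
    induction V using TensorProduct.induction_on with
    | zero => simp
    | tmul v w => simp [G, mul_assoc]
    | add V V' hV hV' => simp only [add_tmul, map_add, LinearMap.add_apply, add_mul, hV, hV']
  have hr' (U : H ⊗[k] H) :
      G (TensorProduct.assoc k H H H (LinearMap.rTensor H (comul (R := k)) U))
        = sandwich k H ρ.toLinearMap (ρ.toLinearMap ∘ₗ anti k H) U (a * b) := by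
    induction U using TensorProduct.induction_on with
    | zero => simp
    | tmul x y => simp [hr, cotwistMap_comul, mul_assoc]
    | add U V hU hV => simp only [map_add, LinearMap.add_apply, hU, hV]
  rw [adAct_apply, ← hr', coassoc_apply, hl]

lemma adAct_cotwistMul (x : H) (Y : H ⊗[k] H) (a b : E) :
    adAct k H ρ.toLinearMap x (cotwistMul ρ Y a b) = cotwistMul ρ (comul (R := k) x * Y) a b := by
  have hmul_tmul (U : H ⊗[k] H) (y z : H) :
      cotwistMul ρ U (adAct k H ρ.toLinearMap y a) (adAct k H ρ.toLinearMap z b)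
        = cotwistMul ρ (U * y ⊗ₜ z) a b := by
    induction U using TensorProduct.induction_on with
    | zero => simp [cotwistMul_zero]
    | tmul u v => simp [adAct_mul]
    | add U V hU hV => rw [cotwistMul_add, hU, hV, add_mul, cotwistMul_add]
  induction Y using TensorProduct.induction_on with
  | zero => simp [cotwistMul_zero]
  | tmul y z => rw [cotwistMul_tmul, adAct_apply_mul, hmul_tmul]
  | add Y Y' hY hY' => rw [cotwistMul_add, map_add, hY, hY', mul_add, cotwistMul_add]

def triEval (a b : E) : H ⊗[k] (H ⊗[k] H) →ₗ[k] E :=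
  LinearMap.mul' k E ∘ₗ
    TensorProduct.map ((adAct k H ρ.toLinearMap).flip a) ((cotwistMap ρ).flip b)

lemma triEval_tmul (x : H) (Y : H ⊗[k] H) (a b : E) :
    triEval ρ a b (x ⊗ₜ Y) = adAct k H ρ.toLinearMap x a * cotwistMap ρ Y b := rfl

lemma triEval_assoc_tmul (Z : H ⊗[k] H) (y : H) (a b : E) :
    triEval ρ a b (TensorProduct.assoc k H H H (Z ⊗ₜ y)) = cotwistMul ρ Z a b * ρ y := by
  induction Z using TensorProduct.induction_on with
  | zero => simp [cotwistMul_zero]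
  | tmul x z => simp [triEval_tmul, mul_assoc]
  | add Z Z' hZ hZ' => rw [add_tmul, map_add, map_add, hZ, hZ', cotwistMul_add, add_mul]

lemma cotwistMap_cotwistMul_eq_triEval (X Y : H ⊗[k] H) (a b : E) :
    cotwistMap ρ X (cotwistMul ρ Y a b) = triEval ρ a b (comulTensorId X * tensorOne Y) := by
  induction X using TensorProduct.induction_on with
  | zero => simp
  | tmul x y =>
    rw [cotwistMap_tmul, adAct_cotwistMul, ← triEval_assoc_tmul, comulTensorId_tmul,
      tensorOne_apply, ← tensorAssoc_mul, Algebra.TensorProduct.tmul_mul_tmul, mul_one]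
  | add X X' hX hX' => simp only [map_add, LinearMap.add_apply, add_mul, hX, hX']

lemma cotwistMap_mul_cotwistMap_eq_triEval (X Y : H ⊗[k] H) (a b : E) :
    cotwistMap ρ X a * cotwistMap ρ Y b = triEval ρ a b (idTensorComul X * oneTensor Y) := by
  induction X using TensorProduct.induction_on with
  | zero => simp
  | tmul x y =>
    rw [cotwistMap_tmul, idTensorComul_tmul, oneTensor_apply,
      Algebra.TensorProduct.tmul_mul_tmul, mul_one, triEval_tmul, cotwistMap_comul_mul, mul_assoc]
  | add X X' hX hX' => simp only [map_add, LinearMap.add_apply, add_mul, hX, hX']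

namespace IsCocycle

variable {F Finv : H ⊗[k] H} (hF : IsCocycle k H F Finv)
include hF

lemma cotwistMap_eq_sandwich_inv (a : E) :
    cotwistMap ρ F a = sandwich k H ρ.toLinearMap
      (ρ.toLinearMap ∘ₗ LinearMap.mulRight k (theta k H F) ∘ₗ anti k H) Finv a := by
  rw [cotwistMap_eq_sandwich, hF.lTensor_antipodeMul_comulTensorId, sandwich_map_id]
  rfl

lemma cotwistMap_cotwistMul (a b : E) :
    cotwistMap ρ F (cotwistMul ρ F a b) = cotwistMap ρ F a * cotwistMap ρ F b := by
  rw [cotwistMap_cotwistMul_eq_triEval, cotwistMap_mul_cotwistMap_eq_triEval,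
    hF.comulTensorId_mul_tensorOne]

end IsCocycle

end AdjointModuleAlgebra

end Cotwist

theorem cotwist_phi_isIso
    (F Finv : H ⊗[k] H) (hF : IsCocycle k H F Finv)
    (γinv : H →ₗ[k] H)
    (hγ2 : ∀ h : H, anti k H (γinv h) = h)
    (E : Type*) [Ring E] [Algebra k E] (ρ : H →ₐ[k] E)
    (φ φinv : E →ₗ[k] E)
    (hφ : φ = TensorProduct.lift
      ((bcomp k H ((LinearMap.mul k E).flip ∘ₗ ρ.toLinearMap) (adAct k H ρ.toLinearMap)).flip) F)
    (hφinv : φinv = sandwich k H ρ.toLinearMap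
      (ρ.toLinearMap ∘ₗ (anti k H) ∘ₗ (LinearMap.mulRight k (zeta k H γinv Finv))) F) :
    (∀ a : E, φ a = (sandwich k H ρ.toLinearMap
        (ρ.toLinearMap ∘ₗ (LinearMap.mulRight k (theta k H F)) ∘ₗ (anti k H)) Finv) a) ∧
    (∀ a : E, φ (φinv a) = a) ∧ (∀ a : E, φinv (φ a) = a) ∧
    (∀ a b : E, φ (LinearMap.mul' k E
        ((pairAct k H (adAct k H ρ.toLinearMap)) F (a ⊗ₜ b))) = φ a * φ b) := by
  have hφF : φ = cotwistMap ρ F := hφ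
  have hi (a : E) : φ a = sandwich k H ρ.toLinearMap
      (ρ.toLinearMap ∘ₗ LinearMap.mulRight k (theta k H F) ∘ₗ anti k H) Finv a := by
    rw [hφF, hF.cotwistMap_eq_sandwich_inv]
  have hφ' (a : E) :
      φ a = sandwich k H ρ.toLinearMap (ρ.toLinearMap ∘ₗ antiTw k H (theta k H F) 1) Finv a := by
    rw [hi, mulRight_comp_anti]
  have hφinv' (a : E) :
      φinv a
        = sandwich k H ρ.toLinearMap (ρ.toLinearMap ∘ₗ antiTw k H 1 (mulAntipode Finv)) F a := by
    rw [hφinv, anti_comp_mulRight, anti_zeta hγ2]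
  refine ⟨hi, fun a => ?_, fun a => ?_, fun a b => ?_⟩
  · rw [hφinv', hφ', sandwich_antiTw_sandwich_antiTw ρ (one_mul 1), hF.2.1, sandwich_antiTw_one,
      hF.mulAntipode_inv_mul_theta, map_one, mul_one]
  · rw [hφ', hφinv', sandwich_antiTw_sandwich_antiTw ρ hF.theta_mul_mulAntipode_inv, hF.1,
      sandwich_antiTw_one, mul_one, map_one, mul_one]
  · rw [hφF]
    exact hF.cotwistMap_cotwistMul ρ a b

end
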